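/- Let n ≡ 1 (mod 6). If there exist (2^n - 2)/42 pairwise disjoint complete 3-dimensional F_2-subspaces of F_{2^n} (i.e., subspaces X_1, ..., X_m with |Δ(X_i)| = 42 and Δ(X_i) ∩ Δ(X_j) = ∅ for i ≠ j, m = (2^n-2)/42), then the set of all cyclic shifts { α^j·X_i : 0 ≤ j ≤ 2^n - 2, 1 ≤ i ≤ m } is a Steiner structure S_2[2,3,n]. -/

import Mathlib

/-!
A 2-dimensional subspace `T = span {a, b}` lies in the shift `c • X` exactly when `a = c x` and
`b = c y` for some `x, y ∈ X`, and then `a / b = x / y` is a ratio of `X`. Completeness says that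
each ratio of `X_i` comes from a single pair `(x, y)`, and disjointness says that it belongs to a
single `X_i`; so `T` lies in at most one shift. Counting gives existence: the `m` ratio sets have
`42 m = 2^n - 2` elements in total, so they partition `F \ {0, 1}`, which contains `a / b`.
-/

open Set Submodule Module Function

theorem Set.ncard_offDiag {α : Type*} {s : Set α} (hs : s.Finite) :
    s.offDiag.ncard = s.ncard * s.ncard - s.ncard := by
  classical
  obtain ⟨t, rfl⟩ := hs.exists_finset_coe
  rw [← Finset.coe_offDiag, ncard_coe_finset, ncard_coe_finset, Finset.offDiag_card]

section RatioSet

variable {G₀ : Type*} [GroupWithZero G₀]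

-- The paper's difference set `Δ(X)` of exponents, written multiplicatively: `α^(i-j) = α^i / α^j`.
def ratioSet (s : Set G₀) : Set G₀ :=
  (fun p : G₀ × G₀ => p.1 / p.2) '' (s \ {0}).offDiag

theorem setOf_div_eq_ratioSet (s : Set G₀) :
    {z | ∃ x ∈ s, ∃ y ∈ s, x ≠ 0 ∧ y ≠ 0 ∧ x ≠ y ∧ z = x / y} = ratioSet s := by
  ext z
  simp only [ratioSet, mem_image, mem_offDiag, mem_sdiff, mem_singleton_iff, Prod.exists]
  aesop

theorem ratioSet_subset_compl_zero_one (s : Set G₀) : ratioSet s ⊆ {0, 1}ᶜ := by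
  rintro _ ⟨⟨x, y⟩, ⟨⟨-, hx⟩, ⟨-, hy⟩, hxy⟩, rfl⟩
  simp only [mem_singleton_iff] at hx hy
  simp [div_ne_zero hx hy, div_eq_one_iff_eq hy, hxy]

theorem injOn_div_of_ncard_ratioSet {s : Set G₀} (hs : s.Finite) {k : ℕ}
    (hk : (s \ {0}).ncard = k) (hratio : (ratioSet s).ncard = k * k - k) :
    InjOn (fun p : G₀ × G₀ => p.1 / p.2) (s \ {0}).offDiag := by
  refine injOn_of_ncard_image_eq ?_ hs.sdiff.offDiag
  rw [← ratioSet, hratio, ncard_offDiag hs.sdiff, hk]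

theorem iUnion_ratioSet_eq_compl_zero_one [Finite G₀] {ι : Type*} [Finite ι] {X : ι → Set G₀}
    (hdisj : Pairwise (Disjoint on fun i => ratioSet (X i)))
    (hcard : ∑ᶠ i, (ratioSet (X i)).ncard = Nat.card G₀ - 2) :
    ⋃ i, ratioSet (X i) = {0, 1}ᶜ := by
  refine eq_of_subset_of_ncard_le (iUnion_subset fun i => ratioSet_subset_compl_zero_one _) ?_
  rw [ncard_iUnion_of_finite (fun _ => toFinite _) hdisj, hcard, ncard_compl,
    ncard_pair zero_ne_one]

end RatioSet

section Shift

variable {G₀ : Type*} [CommGroupWithZero G₀]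

theorem mem_offDiag_and_div_eq_of_mul_eq {s : Set G₀} {a b c x y : G₀} (ha : a ≠ 0) (hb : b ≠ 0)
    (hab : a ≠ b) (hx : x ∈ s) (hy : y ∈ s) (hcx : c * x = a) (hcy : c * y = b) :
    (x, y) ∈ (s \ {0}).offDiag ∧ x / y = a / b := by
  have hc : c ≠ 0 := left_ne_zero_of_mul (hcx ▸ ha)
  refine ⟨mem_offDiag.2 ⟨⟨hx, ?_⟩, ⟨hy, ?_⟩, ?_⟩, ?_⟩
  · exact fun (hx0 : x = 0) => ha (by rw [← hcx, hx0, mul_zero])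
  · exact fun (hy0 : y = 0) => hb (by rw [← hcy, hy0, mul_zero])
  · exact fun (hxy : x = y) => hab (by rw [← hcx, ← hcy, hxy])
  · rw [← hcx, ← hcy, mul_div_mul_left _ _ hc]

theorem existsUnique_mul_image_mem_pair {ι : Type*} {X : ι → Set G₀}
    (hinj : ∀ i, InjOn (fun p : G₀ × G₀ => p.1 / p.2) (X i \ {0}).offDiag)
    (hdisj : Pairwise (Disjoint on fun i => ratioSet (X i)))
    {a b : G₀} (hab : a / b ∈ ⋃ i, ratioSet (X i)) :
    ∃! p : ι × G₀, p.2 ≠ 0 ∧ a ∈ (p.2 * ·) '' X p.1 ∧ b ∈ (p.2 * ·) '' X p.1 := by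
  obtain ⟨i, ⟨x, y⟩, hxy, hdiv⟩ := mem_iUnion.1 hab
  have hab01 := ratioSet_subset_compl_zero_one (X i) ⟨_, hxy, hdiv⟩
  obtain ⟨⟨hx, hx0⟩, ⟨hy, hy0⟩, -⟩ := mem_offDiag.1 hxy
  simp only [mem_compl_iff, mem_insert_iff, mem_singleton_iff, not_or, div_eq_zero_iff]
    at hab01 hx0 hy0 hdiv
  obtain ⟨⟨ha, hb⟩, hab1⟩ := hab01
  have hne : a ≠ b := fun h => hab1 (by rw [h, div_self hb])
  refine ⟨(i, a / x), ⟨div_ne_zero ha hx0, ⟨x, hx, div_mul_cancel₀ a hx0⟩, ⟨y, hy, ?_⟩⟩, ?_⟩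
  · show a / x * y = b
    rw [div_eq_div_iff hy0 hb] at hdiv
    rw [div_mul_eq_mul_div, ← hdiv, mul_div_cancel_left₀ _ hx0]
  · rintro ⟨i', c⟩ ⟨-, ⟨x', hx', hcx⟩, ⟨y', hy', hcy⟩⟩
    obtain ⟨hmem, hdiv'⟩ := mem_offDiag_and_div_eq_of_mul_eq ha hb hne hx' hy' hcx hcy
    obtain rfl : i = i' := by
      by_contra h
      exact (hdisj h).ne_of_mem ⟨_, hxy, hdiv⟩ ⟨_, hmem, hdiv'⟩ rfl
    obtain ⟨rfl, -⟩ := Prod.ext_iff.1 (hinj i hmem hxy (hdiv'.trans hdiv.symm))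
    rw [← hcx, mul_div_cancel_right₀ _ hx0]

end Shift

theorem existsUnique_shift_ge_span_pair {K F ι : Type*} [CommSemiring K] [Field F] [Algebra K F]
    {X : ι → Submodule K F}
    (hinj : ∀ i, InjOn (fun p : F × F => p.1 / p.2) ((X i : Set F) \ {0}).offDiag)
    (hdisj : Pairwise (Disjoint on fun i => ratioSet (X i : Set F)))
    {a b : F} (hab : a / b ∈ ⋃ i, ratioSet (X i : Set F)) :
    ∃! W : Submodule K F, (∃ i, ∃ c ≠ 0, (W : Set F) = (c * ·) '' X i) ∧ span K {a, b} ≤ W := by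
  obtain ⟨⟨i, c⟩, ⟨hc, hac, hbc⟩, huniq⟩ := existsUnique_mul_image_mem_pair hinj hdisj hab
  have hspan_le (W : Submodule K F) :
      span K {a, b} ≤ W ↔ a ∈ (W : Set F) ∧ b ∈ (W : Set F) := by
    simp [span_le, insert_subset_iff]
  refine ⟨(X i).map (LinearMap.mulLeft K c),
    ⟨⟨i, c, hc, map_coe _ _⟩, (hspan_le _).2 ⟨hac, hbc⟩⟩, ?_⟩
  rintro W ⟨⟨i', c', hc', hW⟩, hTW⟩
  have hab' := (hspan_le W).1 hTW
  rw [hW] at hab'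
  obtain ⟨rfl, rfl⟩ := Prod.mk.inj (huniq (i', c') ⟨hc', hab'⟩)
  exact SetLike.coe_injective (by rw [hW, map_coe]; rfl)

theorem exists_pow_eq_of_orderOf_eq {G₀ : Type*} [GroupWithZero G₀] [Finite G₀] {α : G₀ˣ}
    (hα : orderOf α = Nat.card G₀ - 1) {c : G₀} (hc : c ≠ 0) :
    ∃ j < Nat.card G₀ - 1, (α : G₀) ^ j = c := by
  classical
  have hgen : Subgroup.zpowers α = ⊤ :=
    Subgroup.eq_top_of_card_eq _ (by rw [Nat.card_zpowers, hα, Nat.card_units])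
  have hmem : Units.mk0 c hc ∈ Submonoid.powers α := by
    rw [mem_powers_iff_mem_zpowers, hgen]
    exact Subgroup.mem_top _
  obtain ⟨j, hj, hαj⟩ := Finset.mem_image.1 (mem_powers_iff_mem_range_orderOf.1 hmem)
  exact ⟨j, hα ▸ Finset.mem_range.1 hj, by rw [← Units.val_pow_eq_pow_val, hαj, Units.val_mk0]⟩

theorem Submodule.ncard_diff_zero {K V : Type*} [DivisionRing K] [Finite K] [AddCommGroup V]
    [Module K V] (X : Submodule K V) [Module.Finite K X] :
    ((X : Set V) \ {0}).ncard = Nat.card K ^ finrank K X - 1 := by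
  rw [ncard_sdiff (singleton_subset_iff.2 X.zero_mem) (toFinite _), ncard_singleton,
    ← Nat.card_coe_set_eq (X : Set V), SetLike.coe_sort_coe, natCard_eq_pow_finrank (K := K)]

theorem Submodule.exists_eq_span_pair_of_finrank_eq_two {K V : Type*} [DivisionRing K]
    [AddCommGroup V] [Module K V] {T : Submodule K V} (hT : finrank K T = 2) :
    ∃ a b : V, a ≠ 0 ∧ b ≠ 0 ∧ a ≠ b ∧ T = span K {a, b} := by
  have := Module.finite_of_finrank_eq_succ hT
  let B := Module.finBasisOfFinrankEq K T hT
  have hli : LinearIndependent K (T.subtype ∘ B) :=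
    B.linearIndependent.map' _ T.ker_subtype
  refine ⟨B 0, B 1, hli.ne_zero 0, hli.ne_zero 1, fun h => zero_ne_one (hli.injective h), ?_⟩
  have hrange : range (T.subtype ∘ B) = {(B 0 : V), (B 1 : V)} := by
    ext; simp [Fin.exists_fin_two, eq_comm]
  rw [← hrange, range_comp, span_image, B.span_eq, map_subtype_top]

theorem forty_two_dvd_two_pow_sub_two {n : ℕ} (hn : n % 6 = 1) : 42 ∣ 2 ^ n - 2 := by
  obtain ⟨k, rfl⟩ : ∃ k, n = 6 * k + 1 := ⟨n / 6, by omega⟩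
  have h : 2 ^ (6 * k + 1) - 2 = 2 * (64 ^ k - 1) := by
    rw [Nat.mul_sub_one, pow_succ, pow_mul, mul_comm]
    norm_num
  rw [h]
  exact (by norm_num : 42 ∣ 2 * 63).trans (mul_dvd_mul_left 2 (Nat.sub_one_dvd_pow_sub_one 64 k))

/-- If `n ≡ 1 (mod 6)` and there exist `(2^n - 2)/42` pairwise disjoint complete
3-dimensional `F_2`-subspaces of `F_{2^n}` (each difference set, equivalently ratio
set, has size 42, and the difference sets are pairwise disjoint), then the set of
all their cyclic shifts `α^j·X_i` is a Steiner structure `S_2[2,3,n]`: every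
2-dimensional subspace is contained in exactly one member. -/
theorem disjoint_complete_subspaces_give_steiner
    (n : ℕ) (hn : n % 6 = 1)
    (F : Type*) [Field F] [Fintype F] (hcard : Fintype.card F = 2 ^ n)
    [Algebra (ZMod 2) F]
    (α : Fˣ) (hα : orderOf α = 2 ^ n - 1)
    (m : ℕ) (hm : m = (2 ^ n - 2) / 42)
    (X : Fin m → Submodule (ZMod 2) F)
    (hdim : ∀ i, Module.finrank (ZMod 2) (X i) = 3)
    (hcomplete : ∀ i,
      { z : F | ∃ x ∈ X i, ∃ y ∈ X i, x ≠ 0 ∧ y ≠ 0 ∧ x ≠ y ∧ z = x / y }.ncard = 42)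
    (hdisj : ∀ i j, i ≠ j →
      Disjoint { z : F | ∃ x ∈ X i, ∃ y ∈ X i, x ≠ 0 ∧ y ≠ 0 ∧ x ≠ y ∧ z = x / y }
        { z : F | ∃ x ∈ X j, ∃ y ∈ X j, x ≠ 0 ∧ y ≠ 0 ∧ x ≠ y ∧ z = x / y }) :
    ∀ T : Submodule (ZMod 2) F, Module.finrank (ZMod 2) T = 2 →
      ∃! W : Submodule (ZMod 2) F,
        (∃ i : Fin m, ∃ j ≤ 2 ^ n - 2,
          (W : Set F) = (fun x : F => (α : F) ^ j * x) '' (X i : Set F)) ∧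
        T ≤ W := by
  have hcardF : Nat.card F = 2 ^ n := by rw [Nat.card_eq_fintype_card, hcard]
  replace hcomplete (i : Fin m) : (ratioSet (X i : Set F)).ncard = 42 := by
    rw [← setOf_div_eq_ratioSet]; exact hcomplete i
  replace hdisj : Pairwise (Disjoint on fun i => ratioSet (X i : Set F)) := fun i j h => by
    simp only [onFun, ← setOf_div_eq_ratioSet]; exact hdisj i j h
  have hinj (i : Fin m) : InjOn (fun p : F × F => p.1 / p.2) ((X i : Set F) \ {0}).offDiag :=
    injOn_div_of_ncard_ratioSet (toFinite _)
      (by rw [(X i).ncard_diff_zero, hdim, Nat.card_zmod]) (hcomplete i)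
  have hcover : ⋃ i, ratioSet (X i : Set F) = {0, 1}ᶜ := by
    refine iUnion_ratioSet_eq_compl_zero_one hdisj ?_
    have hm42 : m * 42 = 2 ^ n - 2 := hm ▸ Nat.div_mul_cancel (forty_two_dvd_two_pow_sub_two hn)
    rw [finsum_eq_sum_of_fintype]
    simp [hcomplete, hcard, hm42]
  intro T hT
  obtain ⟨a, b, ha, hb, hab, rfl⟩ := exists_eq_span_pair_of_finrank_eq_two hT
  obtain ⟨W, ⟨⟨i, c, hc, hW⟩, hTW⟩, huniq⟩ := existsUnique_shift_ge_span_pair hinj hdisj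
    (a := a) (b := b) (by simp [hcover, ha, hb, hab, div_eq_one_iff_eq])
  obtain ⟨j, hj, rfl⟩ := exists_pow_eq_of_orderOf_eq (hα.trans (by rw [hcardF])) hc
  exact ⟨W, ⟨⟨i, j, by omega, hW⟩, hTW⟩, fun W' ⟨⟨i', j', _, hW'⟩, hTW'⟩ =>
    huniq W' ⟨⟨i', _, pow_ne_zero _ α.ne_zero, hW'⟩, hTW'⟩⟩
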